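/- arXiv:math/9904104 — 3 statements merged into one kernel-verified Lean document; each statement's English description precedes it below -/
import Mathlib

section
/- A power series Σ b_{i,j} x^i y^j in B[[x,y]] is G-invariant (i.e. annihilated by the action D^{(k)}·b = Σ_{k₀+k₁+k₂=k} (-1)^{k₀} D^{(k₀)}_B D^{(k₁)}_x D^{(k₂)}_y b for all k ≥ 1) if and only if its coefficients satisfy D^{(k)} · b_{i,j} = Σ_{p+q=k} binom(p+i,i) binom(q+j,j) b_{p+i, q+j} for all k, i, j ≥ 0. -/
/-!
A family `b : ℕ → ℕ → B` is the coefficient array of `Σ b i j x^i y^j`, and `D^{(k)}` acts on it by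
differentiation through `Δₖ = Σ_{p+q=k} ∂ₓ^{(p)} ∂_y^{(q)}` (`dividedDeriv`). Rescaling the
coefficients by `i! j!` turns `∂ = ∂ₓ + ∂_y` into a sum of two commuting shifts, whence
`Δₖ = ∂^k / k!` by the binomial theorem. The invariance condition in degree `k` reads
`Σₐ (-1)^a Δ_{k-a} D_B^{(a)} b = 0`, while `Σₐ (-1)^a Δ_{k-a} Δₐ = ∂^k (1 - 1)^k / k! = 0` for
`k ≥ 1`. So the relations `D_B^{(a)} b = Δₐ b` give invariance, and conversely invariance in
degree `k` determines `D_B^{(k)} b` from the `D_B^{(a)} b`, `a < k`, which by induction agree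
with `Δₐ b`.
-/

open Finset
open scoped Nat

namespace SeriesCoeff

variable (K : Type*) [Field K] {B : Type*} [AddCommGroup B] [Module K B]

/-- The `(i, j)` coefficient of `Σ_{p+q=k} ∂ₓ^{(p)} ∂_y^{(q)} Σ b i j x^i y^j`. -/
def dividedDeriv (k : ℕ) : Module.End K (ℕ → ℕ → B) where
  toFun b i j := ∑ p ∈ range (k + 1),
    (((p + i).choose i : K) * (((k - p) + j).choose j : K)) • b (p + i) ((k - p) + j)
  map_add' b c := by funext i j; simp [smul_add, sum_add_distrib]
  map_smul' r b := by funext i j; simp [smul_sum, smul_comm r]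

def totalDeriv : Module.End K (ℕ → ℕ → B) where
  toFun b i j := ((i + 1 : ℕ) : K) • b (i + 1) j + ((j + 1 : ℕ) : K) • b i (j + 1)
  map_add' b c := by funext i j; simp only [Pi.add_apply, smul_add]; abel
  map_smul' r b := by funext i j; simp [smul_comm r]

def shiftX : Module.End K (ℕ → ℕ → B) where
  toFun b i j := b (i + 1) j
  map_add' _ _ := rfl
  map_smul' _ _ := rfl

def shiftY : Module.End K (ℕ → ℕ → B) where
  toFun b i j := b i (j + 1)
  map_add' _ _ := rfl
  map_smul' _ _ := rfl

def factorialScale : Module.End K (ℕ → ℕ → B) where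
  toFun b i j := ((i ! : K) * j !) • b i j
  map_add' b c := by funext i j; simp [smul_add]
  map_smul' r b := by funext i j; simp [smul_comm r]

variable {K}

theorem factorial_mul_choose_mul_choose [CharZero K] (p q i j : ℕ) :
    ((p + q)! : K) * ((i ! : K) * j !) * (((p + i).choose i : K) * ((q + j).choose j : K))
      = ((p + q).choose p : K) * (((i + p)! : K) * (j + q)!) := by
  have hfac (n : ℕ) : (n ! : K) ≠ 0 := Nat.cast_ne_zero.2 n.factorial_ne_zero
  rw [add_comm p i, add_comm q j, Nat.cast_add_choose, Nat.cast_add_choose, Nat.cast_add_choose]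
  field_simp [hfac]

theorem sum_neg_one_pow_mul_inv_factorial_mul_inv_factorial [CharZero K] {k : ℕ} (hk : k ≠ 0) :
    ∑ a ∈ range (k + 1), (-1 : K) ^ a * (((k - a)! : K)⁻¹ * (a ! : K)⁻¹) = 0 := by
  have hfac (n : ℕ) : (n ! : K) ≠ 0 := Nat.cast_ne_zero.2 n.factorial_ne_zero
  have binomial : ∑ a ∈ range (k + 1), (-1 : K) ^ a * (k.choose a : K) = 0 := by
    simpa [zero_pow hk] using (add_pow (-1 : K) 1 k).symm
  calc _ = (k ! : K)⁻¹ * ∑ a ∈ range (k + 1), (-1 : K) ^ a * (k.choose a : K) := by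
        rw [mul_sum]
        refine sum_congr rfl fun a ha => ?_
        rw [Nat.cast_choose K (Nat.lt_succ_iff.1 (mem_range.1 ha))]
        field_simp [hfac]
    _ = 0 := by rw [binomial, mul_zero]

theorem shiftX_pow_apply (m : ℕ) (b : ℕ → ℕ → B) (i j : ℕ) :
    (shiftX K ^ m) b i j = b (i + m) j := by
  induction m generalizing i with
  | zero => rfl
  | succ m ih =>
    rw [pow_succ', Module.End.mul_apply]
    exact (ih (i + 1)).trans (by rw [add_right_comm, add_assoc])

theorem shiftY_pow_apply (m : ℕ) (b : ℕ → ℕ → B) (i j : ℕ) :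
    (shiftY K ^ m) b i j = b i (j + m) := by
  induction m generalizing j with
  | zero => rfl
  | succ m ih =>
    rw [pow_succ', Module.End.mul_apply]
    exact (ih (j + 1)).trans (by rw [add_right_comm, add_assoc])

theorem commute_shiftX_shiftY : Commute (shiftX K) (shiftY K : Module.End K (ℕ → ℕ → B)) :=
  LinearMap.ext fun _ => rfl

theorem shiftX_add_shiftY_pow_apply (k : ℕ) (b : ℕ → ℕ → B) (i j : ℕ) :
    ((shiftX K + shiftY K : Module.End K (ℕ → ℕ → B)) ^ k) b i j
      = ∑ p ∈ range (k + 1), (k.choose p : K) • b (i + p) (j + (k - p)) := by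
  rw [commute_shiftX_shiftY.add_pow, LinearMap.sum_apply]
  simp [Finset.sum_apply, shiftX_pow_apply, shiftY_pow_apply, Module.End.natCast_apply,
    Nat.cast_smul_eq_nsmul]
theorem factorialScale_mul_totalDeriv :
    SemiconjBy (factorialScale K) (totalDeriv K)
      (shiftX K + shiftY K : Module.End K (ℕ → ℕ → B)) := by
  refine LinearMap.ext fun b => funext₂ fun i j => ?_
  simp only [factorialScale, totalDeriv, shiftX, shiftY, LinearMap.coe_mk, AddHom.coe_mk,
    Module.End.mul_apply, LinearMap.add_apply, Pi.add_apply, smul_add, smul_smul,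
    Nat.factorial_succ]
  congr 2 <;> push_cast <;> ring

theorem factorialScale_mul_dividedDeriv [CharZero K] (k : ℕ) :
    (k ! : K) • (factorialScale K * dividedDeriv K k : Module.End K (ℕ → ℕ → B))
      = (shiftX K + shiftY K) ^ k * factorialScale K := by
  refine LinearMap.ext fun b => funext₂ fun i j => ?_
  rw [Module.End.mul_apply, shiftX_add_shiftY_pow_apply]
  simp only [factorialScale, dividedDeriv, LinearMap.smul_apply, Module.End.mul_apply,
    LinearMap.coe_mk, AddHom.coe_mk, Pi.smul_apply, smul_sum, smul_smul]
  refine sum_congr rfl fun p hp => ?_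
  obtain ⟨q, rfl⟩ := Nat.exists_eq_add_of_le (Nat.lt_succ_iff.1 (mem_range.1 hp))
  rw [Nat.add_sub_cancel_left, ← mul_assoc, factorial_mul_choose_mul_choose, add_comm p i,
    add_comm q j]

theorem factorialScale_injective [CharZero K] :
    Function.Injective (factorialScale K : Module.End K (ℕ → ℕ → B)) := by
  intro b c h
  funext i j
  have hne (n : ℕ) : (n ! : K) ≠ 0 := Nat.cast_ne_zero.2 n.factorial_ne_zero
  exact smul_right_injective B (mul_ne_zero (hne i) (hne j)) (congr_fun₂ h i j)

theorem dividedDeriv_eq_inv_factorial_smul_pow [CharZero K] (k : ℕ) :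
    dividedDeriv K k = (k ! : K)⁻¹ • (totalDeriv K ^ k : Module.End K (ℕ → ℕ → B)) := by
  have scaled : factorialScale K * ((k ! : K) • dividedDeriv K k)
      = factorialScale K * (totalDeriv K ^ k : Module.End K (ℕ → ℕ → B)) := by
    rw [mul_smul_comm, factorialScale_mul_dividedDeriv,
      (factorialScale_mul_totalDeriv.pow_right k).eq]
  have hk : (k ! : K) ≠ 0 := Nat.cast_ne_zero.2 k.factorial_ne_zero
  rw [← LinearMap.ext fun b => factorialScale_injective (LinearMap.congr_fun scaled b), smul_smul,
    inv_mul_cancel₀ hk, one_smul]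

theorem dividedDeriv_zero [CharZero K] : dividedDeriv K 0 = (1 : Module.End K (ℕ → ℕ → B)) := by
  simp [dividedDeriv_eq_inv_factorial_smul_pow]

theorem sum_neg_one_pow_smul_dividedDeriv_mul [CharZero K] {k : ℕ} (hk : k ≠ 0) :
    ∑ a ∈ range (k + 1), (-1 : K) ^ a •
      (dividedDeriv K (k - a) * dividedDeriv K a : Module.End K (ℕ → ℕ → B)) = 0 := by
  calc _ = ∑ a ∈ range (k + 1), ((-1 : K) ^ a * (((k - a)! : K)⁻¹ * (a ! : K)⁻¹)) •
        (totalDeriv K ^ k : Module.End K (ℕ → ℕ → B)) := by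
        refine sum_congr rfl fun a ha => ?_
        rw [dividedDeriv_eq_inv_factorial_smul_pow, dividedDeriv_eq_inv_factorial_smul_pow,
          smul_mul_smul_comm, ← pow_add,
          Nat.sub_add_cancel (Nat.lt_succ_iff.1 (mem_range.1 ha)), smul_smul]
    _ = 0 := by rw [← sum_smul, sum_neg_one_pow_mul_inv_factorial_mul_inv_factorial hk, zero_smul]

theorem sum_invariance_eq_sum_dividedDeriv (E : ℕ → B →ₗ[K] B) (b : ℕ → ℕ → B) (k i j : ℕ) :
    ∑ k₀ ∈ range (k + 1), ∑ k₁ ∈ range (k - k₀ + 1),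
      ((-1 : K) ^ k₀ * ((i + k₁).choose k₁ : K) *
        ((j + (k - k₀ - k₁)).choose (k - k₀ - k₁) : K)) • E k₀ (b (i + k₁) (j + (k - k₀ - k₁)))
      = ∑ a ∈ range (k + 1),
          (-1 : K) ^ a • dividedDeriv K (k - a) (fun i j => E a (b i j)) i j := by
  refine sum_congr rfl fun a _ => ?_
  simp only [dividedDeriv, LinearMap.coe_mk, AddHom.coe_mk, smul_sum, smul_smul]
  refine sum_congr rfl fun p _ => ?_
  rw [add_comm p i, add_comm (k - a - p) j, Nat.choose_symm_add, Nat.choose_symm_add, mul_assoc]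

theorem eq_dividedDeriv_of_sum_neg_one_pow_smul_eq_zero [CharZero K] (E : ℕ → B →ₗ[K] B)
    (hE0 : E 0 = LinearMap.id) (b : ℕ → ℕ → B)
    (hS : ∀ k ≠ 0, ∀ i j,
      ∑ a ∈ range (k + 1), (-1 : K) ^ a • dividedDeriv K (k - a) (fun i j => E a (b i j)) i j = 0)
    (k : ℕ) :
    (fun i j => E k (b i j)) = dividedDeriv K k b := by
  induction k using Nat.strong_induction_on with
  | _ k ih =>
  rcases eq_or_ne k 0 with rfl | hk
  · simp [hE0, dividedDeriv_zero]
  have hE : ∑ a ∈ range (k + 1), (-1 : K) ^ a • dividedDeriv K (k - a) (fun i j => E a (b i j))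
      = 0 := funext₂ fun i j => by simpa using hS k hk i j
  have hΔ : ∑ a ∈ range (k + 1), (-1 : K) ^ a • dividedDeriv K (k - a) (dividedDeriv K a b)
      = 0 := by
    simpa using LinearMap.congr_fun (sum_neg_one_pow_smul_dividedDeriv_mul hk) b
  rw [sum_range_succ, sum_congr rfl fun a ha => by rw [ih a (mem_range.1 ha)]] at hE
  rw [sum_range_succ] at hΔ
  rw [Nat.sub_self, dividedDeriv_zero] at hE hΔ
  exact smul_right_injective _ (pow_ne_zero k (neg_ne_zero.2 one_ne_zero))
    (add_left_cancel (hE.trans hΔ.symm))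

end SeriesCoeff

theorem invariant_iff_coeff_relations_general
    (B : Type*) [AddCommGroup B] [Module ℂ B]
    (Dop : ℕ → B →ₗ[ℂ] B)
    (hD0 : Dop 0 = LinearMap.id)
    (b : ℕ → ℕ → B) :
    (∀ k : ℕ, 1 ≤ k → ∀ i j : ℕ,
      ∑ k₀ ∈ Finset.range (k + 1), ∑ k₁ ∈ Finset.range (k - k₀ + 1),
        ((-1 : ℂ) ^ k₀ * ((i + k₁).choose k₁ : ℂ) *
          ((j + (k - k₀ - k₁)).choose (k - k₀ - k₁) : ℂ)) •
            Dop k₀ (b (i + k₁) (j + (k - k₀ - k₁))) = 0)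
    ↔
    (∀ k i j : ℕ, Dop k (b i j) =
      ∑ p ∈ Finset.range (k + 1),
        (((p + i).choose i : ℂ) * (((k - p) + j).choose j : ℂ)) • b (p + i) ((k - p) + j)) := by
  simp_rw [SeriesCoeff.sum_invariance_eq_sum_dividedDeriv]
  constructor
  · intro hS k i j
    exact congr_fun₂ (SeriesCoeff.eq_dividedDeriv_of_sum_neg_one_pow_smul_eq_zero Dop hD0 b
      (fun k hk => hS k (Nat.one_le_iff_ne_zero.2 hk)) k) i j
  · intro hR k hk i j
    have hE : ∀ a, (fun i j => Dop a (b i j)) = SeriesCoeff.dividedDeriv ℂ a b :=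
      fun a => funext₂ (hR a)
    simp_rw [hE]
    simpa using congr_fun₂ (LinearMap.congr_fun
      (SeriesCoeff.sum_neg_one_pow_smul_dividedDeriv_mul (Nat.one_le_iff_ne_zero.1 hk)) b) i j

/-- A power series `Σ b_{i,j} x^i y^j ∈ B[[x,y]]` (given by its coefficient family `b`)
over a `ℂ[T]`-module `B` with divided-power operators `D^{(k)}` (satisfying `D^{(0)} = 1`
and `D^{(p)} ∘ D^{(q)} = binom(p+q,p) D^{(p+q)}`) is `G`-invariant — i.e. annihilated by
the action `D^{(k)}·b = Σ_{k₀+k₁+k₂=k} (-1)^{k₀} D^{(k₀)}_B D^{(k₁)}_x D^{(k₂)}_y b`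
for all `k ≥ 1` — if and only if its coefficients satisfy
`D^{(k)} · b_{i,j} = Σ_{p+q=k} binom(p+i,i) binom(q+j,j) b_{p+i, q+j}` for all `k, i, j ≥ 0`. -/
theorem invariant_iff_coeff_relations
    (B : Type*) [AddCommGroup B] [Module ℂ B]
    (Dop : ℕ → B →ₗ[ℂ] B)
    (hD0 : Dop 0 = LinearMap.id)
    (hDcomp : ∀ p q : ℕ, Dop p ∘ₗ Dop q = ((p + q).choose p : ℂ) • Dop (p + q))
    (b : ℕ → ℕ → B) :
    (∀ k : ℕ, 1 ≤ k → ∀ i j : ℕ,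
      ∑ k₀ ∈ Finset.range (k + 1), ∑ k₁ ∈ Finset.range (k - k₀ + 1),
        ((-1 : ℂ) ^ k₀ * ((i + k₁).choose k₁ : ℂ) *
          ((j + (k - k₀ - k₁)).choose (k - k₀ - k₁) : ℂ)) •
            Dop k₀ (b (i + k₁) (j + (k - k₀ - k₁))) = 0)
    ↔
    (∀ k i j : ℕ, Dop k (b i j) =
      ∑ p ∈ Finset.range (k + 1),
        (((p + i).choose i : ℂ) * (((k - p) + j).choose j : ℂ)) • b (p + i) ((k - p) + j)) :=
  invariant_iff_coeff_relations_general B Dop hD0 b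
end

section
/- If the coefficients of a G-invariant series satisfy D^{(k)}·b_{i,j} = Σ_{p+q=k} binom(p+i,i)binom(q+j,j) b_{p+i,q+j}, then each coefficient can be recovered from boundary coefficients: b_{i,j} = Σ_{p+q=j} (-1)^p binom(i+p, i) D^{(q)} · b_{i+p, 0}. -/
/-!
Apply the invariance relation to each boundary coefficient `b_{i+p,0}`: the right-hand side
becomes a double sum of the `b_{i+s,j-s}`, and after regrouping along `s = p + r` the
coefficient of `b_{i+s,j-s}` is `binom(i+s,i) Σ_{p ≤ s} (-1)^p binom(s,p)`, which vanishes
unless `s = 0`.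
-/

open Finset

theorem Nat.add_choose_mul_add_choose (i p s : ℕ) :
    (i + p).choose i * (i + s).choose (i + p) = (i + s).choose i * s.choose p := by
  rw [mul_comm, Nat.choose_mul (Nat.le_add_right i p), Nat.add_sub_cancel_left,
    Nat.add_sub_cancel_left]

theorem alternating_sum_range_choose_eq_ite (R : Type*) [Ring R] (n : ℕ) :
    ∑ m ∈ range (n + 1), (-1 : R) ^ m * n.choose m = if n = 0 then 1 else 0 := by
  have h := congrArg (Int.cast : ℤ → R) (Int.alternating_sum_range_choose (n := n))
  push_cast at h
  simpa [apply_ite (Int.cast : ℤ → R)] using h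

theorem sum_neg_one_pow_mul_add_choose_mul_add_choose (R : Type*) [CommRing R] (i s : ℕ) :
    ∑ p ∈ range (s + 1), (-1 : R) ^ p * (i + p).choose i * (i + s).choose (i + p) =
      if s = 0 then 1 else 0 := by
  calc ∑ p ∈ range (s + 1), (-1 : R) ^ p * (i + p).choose i * (i + s).choose (i + p)
      = (i + s).choose i * ∑ p ∈ range (s + 1), (-1 : R) ^ p * s.choose p := by
        rw [mul_sum]
        refine sum_congr rfl fun p _ => ?_
        rw [mul_assoc, ← Nat.cast_mul, Nat.add_choose_mul_add_choose, Nat.cast_mul]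
        ring
    _ = if s = 0 then 1 else 0 := by
        rw [alternating_sum_range_choose_eq_ite]
        split_ifs with hs <;> simp [hs]

/-- If the coefficients of a `G`-invariant series over a `ℂ[T]`-module `B` with
divided-power operators `D^{(k)}` satisfy
`D^{(k)}·b_{i,j} = Σ_{p+q=k} binom(p+i,i) binom(q+j,j) b_{p+i,q+j}`,
then each coefficient can be recovered from boundary coefficients:
`b_{i,j} = Σ_{p+q=j} (-1)^p binom(i+p, i) D^{(q)} · b_{i+p, 0}`. -/
theorem coeff_from_boundary
    (B : Type*) [AddCommGroup B] [Module ℂ B]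
    (Dop : ℕ → B →ₗ[ℂ] B)
    (b : ℕ → ℕ → B)
    (hinv : ∀ k i j : ℕ, Dop k (b i j) =
      ∑ p ∈ Finset.range (k + 1),
        (((p + i).choose i : ℂ) * (((k - p) + j).choose j : ℂ)) • b (p + i) ((k - p) + j)) :
    ∀ i j : ℕ, b i j =
      ∑ p ∈ Finset.range (j + 1),
        ((-1 : ℂ) ^ p * ((i + p).choose i : ℂ)) • Dop (j - p) (b (i + p) 0) := by
  intro i j
  let f : ℕ → ℕ → B := fun p r =>
    ((-1 : ℂ) ^ p * (i + p).choose i * (r + (i + p)).choose (i + p)) • b (r + (i + p)) (j - (p + r))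
  symm
  calc ∑ p ∈ range (j + 1), ((-1 : ℂ) ^ p * ((i + p).choose i : ℂ)) • Dop (j - p) (b (i + p) 0)
      = ∑ p ∈ range (j + 1), ∑ r ∈ range (j + 1 - p), f p r := by
        refine sum_congr rfl fun p hp => ?_
        rw [hinv, smul_sum, Nat.sub_add_comm (Nat.lt_succ_iff.mp (mem_range.mp hp))]
        simp only [f, Nat.choose_zero_right, add_zero, Nat.cast_one, mul_one, smul_smul,
          Nat.sub_sub]
    _ = ∑ s ∈ range (j + 1), ∑ p ∈ range (s + 1), f p (s - p) := (sum_range_diag_flip _ _).symm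
    _ = ∑ s ∈ range (j + 1), if s = 0 then b i j else 0 := by
        refine sum_congr rfl fun s _ => ?_
        calc ∑ p ∈ range (s + 1), f p (s - p)
            = ∑ p ∈ range (s + 1),
                ((-1 : ℂ) ^ p * (i + p).choose i * (i + s).choose (i + p)) • b (i + s) (j - s) := by
              refine sum_congr rfl fun p hp => ?_
              have hps := Nat.lt_succ_iff.mp (mem_range.mp hp)
              simp only [f, show s - p + (i + p) = i + s by omega, Nat.add_sub_cancel' hps]
          _ = if s = 0 then b i j else 0 := by
              rw [← sum_smul, sum_neg_one_pow_mul_add_choose_mul_add_choose]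
              split_ifs with hs <;> simp [hs]
    _ = b i j := by simp
end

section
/- The intersection of the iterated Laurent series spaces V[[y]][y^{-1}][[x]][x^{-1}] and V[[x]][x^{-1}][[y]][y^{-1}] (both viewed inside the space of all formal series V[[x, x^{-1}, y, y^{-1}]]) equals V[[x,y]][x^{-1}, y^{-1}], the Laurent polynomials in x and y with power series tails. -/
section

variable {V : Type*} [AddCommGroup V] [Module ℂ V]

/-- A doubly-infinite formal series `Σ f(i,j) x^i y^j ∈ V[[x,x^{-1},y,y^{-1}]]`
lies in `V[[y]][y^{-1}][[x]][x^{-1}]` (Laurent series in `x` whose coefficients are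
Laurent series in `y`): finitely many negative powers of `x` overall, and for each
power of `x` finitely many negative powers of `y`. -/
def MemLaurentXOuter (f : ℤ → ℤ → V) : Prop :=
  (∃ N : ℤ, ∀ i : ℤ, i < N → ∀ j : ℤ, f i j = 0) ∧
  (∀ i : ℤ, ∃ M : ℤ, ∀ j : ℤ, j < M → f i j = 0)

/-- A doubly-infinite formal series lies in `V[[x]][x^{-1}][[y]][y^{-1}]`
(Laurent series in `y` whose coefficients are Laurent series in `x`). -/
def MemLaurentYOuter (f : ℤ → ℤ → V) : Prop :=
  (∃ M : ℤ, ∀ j : ℤ, j < M → ∀ i : ℤ, f i j = 0) ∧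
  (∀ j : ℤ, ∃ N : ℤ, ∀ i : ℤ, i < N → f i j = 0)

/-- A doubly-infinite formal series lies in `V[[x,y]][x^{-1},y^{-1}]`:
uniformly finitely many negative powers of `x` and of `y`. -/
def MemLaurentXY (f : ℤ → ℤ → V) : Prop :=
  ∃ N M : ℤ, ∀ i j : ℤ, (i < N ∨ j < M) → f i j = 0

/-- The intersection of the iterated Laurent series spaces
`V[[y]][y^{-1}][[x]][x^{-1}]` and `V[[x]][x^{-1}][[y]][y^{-1}]` (both viewed inside the
space of all formal series `V[[x,x^{-1},y,y^{-1}]]`) equals `V[[x,y]][x^{-1},y^{-1}]`,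
the Laurent polynomials in `x` and `y` with power series tails. -/
theorem laurent_intersection (f : ℤ → ℤ → V) :
    (MemLaurentXOuter f ∧ MemLaurentYOuter f) ↔ MemLaurentXY f := by
  constructor
  · rintro ⟨⟨⟨N, hN⟩, -⟩, ⟨M, hM⟩, -⟩
    exact ⟨N, M, fun i j h => h.elim (fun h => hN i h j) (fun h => hM j h i)⟩
  · rintro ⟨N, M, h⟩
    exact ⟨⟨⟨N, fun i hi j => h i j (Or.inl hi)⟩,
            fun i => ⟨M, fun j hj => h i j (Or.inr hj)⟩⟩,
           ⟨M, fun j hj i => h i j (Or.inr hj)⟩,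
           fun j => ⟨N, fun i hi => h i j (Or.inl hi)⟩⟩

end
end
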